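/- arXiv:math/0603103 — 3 statements merged into one kernel-verified Lean document; each statement's English description precedes it below -/
import Mathlib

section
/- Let A ⊆ ℝ be Lebesgue measurable. Then the essential closure of the essential closure of A is contained in the essential closure of A. -/
open MeasureTheory Set

/-- Essential closure of a set `A ⊆ ℝ`. -/
def essCl (A : Set ℝ) : Set ℝ :=
  {x : ℝ | ∀ ε > 0, 0 < volume (Ioo (x - ε) (x + ε) ∩ A)}

theorem essCl_essCl_subset (A : Set ℝ) (hA : MeasurableSet A) :
    essCl (essCl A) ⊆ essCl A := by
  intro x hx ε hε
  have hpos := hx ε hε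
  obtain ⟨y, hyI, hyA⟩ : (Ioo (x - ε) (x + ε) ∩ essCl A).Nonempty :=
    nonempty_of_measure_ne_zero hpos.ne'
  set δ := min (y - (x - ε)) ((x + ε) - y) with hδdef
  have hδ : 0 < δ := lt_min (by linarith [hyI.1]) (by linarith [hyI.2])
  have hsub : Ioo (y - δ) (y + δ) ⊆ Ioo (x - ε) (x + ε) := by
    intro z hz
    have h1 : δ ≤ y - (x - ε) := min_le_left _ _
    have h2 : δ ≤ (x + ε) - y := min_le_right _ _
    exact ⟨by linarith [hz.1], by linarith [hz.2]⟩
  calc 0 < volume (Ioo (y - δ) (y + δ) ∩ A) := hyA δ hδ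
    _ ≤ volume (Ioo (x - ε) (x + ε) ∩ A) :=
      measure_mono (inter_subset_inter_left _ hsub)
end

section
/- Let m : ℂ₊ → ℂ be a Herglotz function (analytic on the open upper half-plane with values in the closed upper half-plane, not identically real). If the normal boundary limit lim_{ε↓0} m(λ+iε) exists and equals 0 for all λ in a subset of ℝ of positive Lebesgue measure, then m ≡ 0. -/
/-!
If `m` is not constant, the open mapping theorem puts its values in the open upper half-plane,
so `g = m / (m + i)` is holomorphic, zero-free and bounded by `1`, with normal limits `0` on `E`.
Then `u = -log ‖g‖` is a nonnegative harmonic function tending to `+∞` along the normals over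
`E`. With the weight `w x = sin (π (x - a))`, which vanishes at the ends of `[a, a + 1]` and
satisfies `w'' = -π² w`, the average `h y = ∫ u (x + i y) w x dx` satisfies
`h'' = -∫ ∂ₓ²u w ≤ π² h`, so `h` stays bounded as `y ↓ 0`. Fatou's lemma then shows that
`E ∩ (a, a + 1)` is null for every `a`.
-/

open MeasureTheory Set Filter Topology Complex Real
open scoped ENNReal

-- The term that `{z : ℂ | 0 < z.im}` elaborates to.
local notation "ℂ₊" => Set.ofPred (fun z : ℂ => 0 < Complex.im z)

theorem hasDerivAt_intervalIntegral_of_continuousOn {F F' : ℝ → ℝ → ℝ} {s : Set ℝ}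
    (hs : IsOpen s) {a b y₀ : ℝ} (hy₀ : y₀ ∈ s)
    (hF : ContinuousOn (Function.uncurry F) (s ×ˢ univ))
    (hF' : ContinuousOn (Function.uncurry F') (s ×ˢ univ))
    (hd : ∀ y ∈ s, ∀ x, HasDerivAt (F · x) (F' y x) y) :
    HasDerivAt (fun y => ∫ x in a..b, F y x) (∫ x in a..b, F' y₀ x) y₀ := by
  have hslice {G : ℝ → ℝ → ℝ} (hG : ContinuousOn (Function.uncurry G) (s ×ˢ univ)) {y : ℝ}
      (hy : y ∈ s) : Continuous (G y) :=
    continuousOn_univ.1 <|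
      hG.comp (continuous_const.prodMk continuous_id).continuousOn fun _ _ => ⟨hy, trivial⟩
  obtain ⟨r, hr, hrs⟩ := Metric.nhds_basis_closedBall.mem_iff.1 (hs.mem_nhds hy₀)
  obtain ⟨C, hC⟩ := ((isCompact_closedBall y₀ r).prod isCompact_uIcc).exists_bound_of_continuousOn
    (hF'.mono (prod_mono hrs (subset_univ _)))
  refine (intervalIntegral.hasDerivAt_integral_of_dominated_loc_of_deriv_le (bound := fun _ => C)
    (Metric.ball_mem_nhds y₀ hr) ?_ ((hslice hF hy₀).intervalIntegrable a b)
    (hslice hF' hy₀).aestronglyMeasurable ?_ intervalIntegrable_const ?_).2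
  · filter_upwards [hs.mem_nhds hy₀] with y hy using (hslice hF hy).aestronglyMeasurable
  · exact Eventually.of_forall fun x hx y hy =>
      hC (y, x) ⟨Metric.ball_subset_closedBall hy, uIoc_subset_uIcc hx⟩
  · exact Eventually.of_forall fun x _ y hy => hd y (hrs (Metric.ball_subset_closedBall hy)) x

theorem sin_pi_mul_sub_nonneg {a x : ℝ} (hx : x ∈ Icc a (a + 1)) : 0 ≤ Real.sin (π * (x - a)) :=
  sin_nonneg_of_nonneg_of_le_pi (by nlinarith [hx.1, pi_pos]) (by nlinarith [hx.2, pi_pos])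

theorem sin_pi_mul_sub_pos {a x : ℝ} (hx : x ∈ Ioo a (a + 1)) : 0 < Real.sin (π * (x - a)) :=
  sin_pos_of_pos_of_lt_pi (by nlinarith [hx.1, pi_pos]) (by nlinarith [hx.2, pi_pos])

theorem integral_deriv2_mul_sin_eq {U U' U'' : ℝ → ℝ} {a : ℝ}
    (hU : ∀ x ∈ uIcc a (a + 1), HasDerivAt U (U' x) x)
    (hU' : ∀ x ∈ uIcc a (a + 1), HasDerivAt U' (U'' x) x)
    (hU'' : IntervalIntegrable U'' volume a (a + 1)) :
    ∫ x in a..a + 1, U'' x * Real.sin (π * (x - a)) =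
      π * (U a + U (a + 1)) - π ^ 2 * ∫ x in a..a + 1, U x * Real.sin (π * (x - a)) := by
  have hθ (x : ℝ) : HasDerivAt (fun x => π * (x - a)) π x := by
    simpa using ((hasDerivAt_id x).sub_const a).const_mul π
  have hsin (x : ℝ) :
      HasDerivAt (fun x => Real.sin (π * (x - a))) (π * Real.cos (π * (x - a))) x := by
    simpa [mul_comm] using (hθ x).sin
  have hcos (x : ℝ) :
      HasDerivAt (fun x => π * Real.cos (π * (x - a))) (-π ^ 2 * Real.sin (π * (x - a))) x :=
    ((hθ x).cos.const_mul π).congr_deriv (by ring)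
  have hU'cont : ContinuousOn U' (uIcc a (a + 1)) :=
    fun x hx => (hU' x hx).continuousAt.continuousWithinAt
  have first := intervalIntegral.integral_mul_deriv_eq_deriv_mul (fun x _ => hsin x) hU'
    ((by fun_prop : Continuous fun x => π * Real.cos (π * (x - a))).intervalIntegrable _ _) hU''
  have second := intervalIntegral.integral_mul_deriv_eq_deriv_mul (fun x _ => hcos x) hU
    ((by fun_prop : Continuous fun x => -π ^ 2 * Real.sin (π * (x - a))).intervalIntegrable _ _)
    hU'cont.intervalIntegrable
  simp only [add_sub_cancel_left, sub_self, mul_one, mul_zero, Real.sin_pi, Real.sin_zero,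
    Real.cos_pi, Real.cos_zero] at first second
  have hswap : ∫ x in a..a + 1, U'' x * Real.sin (π * (x - a)) =
      ∫ x in a..a + 1, Real.sin (π * (x - a)) * U'' x :=
    intervalIntegral.integral_congr fun x _ => mul_comm _ _
  have hpull : ∫ x in a..a + 1, -π ^ 2 * Real.sin (π * (x - a)) * U x =
      -π ^ 2 * ∫ x in a..a + 1, U x * Real.sin (π * (x - a)) := by
    rw [← intervalIntegral.integral_const_mul]
    exact intervalIntegral.integral_congr fun x _ => by ring
  rw [hswap, first, second, hpull]
  ring

theorem bddAbove_image_Ioc_of_deriv2_le {κ : ℝ} (hκ : 0 ≤ κ) {h h' h'' : ℝ → ℝ}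
    (hh : ∀ y > 0, HasDerivAt h (h' y) y) (hh' : ∀ y > 0, HasDerivAt h' (h'' y) y)
    (hle : ∀ y > 0, h'' y ≤ κ ^ 2 * h y) (hnonneg : ∀ y > 0, 0 ≤ h y) :
    BddAbove (h '' Ioc 0 1) := by
  -- `q` is antitone since `q' = e^{κy} (h'' - κ² h) ≤ 0`; its value at `1` bounds `h'` below.
  set q : ℝ → ℝ := fun y => Real.exp (κ * y) * (h' y - κ * h y)
  have hq (y : ℝ) (hy : 0 < y) :
      HasDerivAt q (Real.exp (κ * y) * (h'' y - κ ^ 2 * h y)) y := by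
    have hexp := ((hasDerivAt_id y).const_mul κ).exp
    refine (hexp.mul ((hh' y hy).sub ((hh y hy).const_mul κ))).congr_deriv ?_
    simp only [id, mul_one, Pi.sub_apply]
    ring
  have hq_anti : AntitoneOn q (Ioi 0) := by
    refine antitoneOn_of_deriv_nonpos (convex_Ioi 0)
      (fun y hy => (hq y hy).continuousAt.continuousWithinAt) ?_ ?_ <;> rw [interior_Ioi]
    · exact fun y hy => (hq y hy).differentiableAt.differentiableWithinAt
    · intro y hy
      rw [(hq y hy).deriv]
      exact mul_nonpos_of_nonneg_of_nonpos (Real.exp_nonneg _) (sub_nonpos.2 (hle y hy))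
  set M := |q 1|
  have hderiv_ge (t : ℝ) (ht : t ∈ Ioc 0 1) : -M ≤ h' t := by
    have hκh : 0 ≤ κ * h t := mul_nonneg hκ (hnonneg t ht.1)
    rcases le_or_gt 0 (h' t - κ * h t) with hpos | hneg
    · linarith [abs_nonneg (q 1)]
    · have hq_le : q t ≤ h' t - κ * h t := by
        simpa using mul_le_mul_of_nonpos_right
          (Real.one_le_exp (mul_nonneg hκ ht.1.le)) hneg.le
      linarith [hq_anti (mem_Ioi.2 ht.1) (mem_Ioi.2 one_pos) ht.2, neg_abs_le (q 1)]
  have hmono : MonotoneOn (fun t => h t + M * t) (Ioc 0 1) := by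
    have hd (t : ℝ) (ht : 0 < t) : HasDerivAt (fun t => h t + M * t) (h' t + M) t :=
      (hh t ht).add ((hasDerivAt_id t).const_mul M |>.congr_deriv (mul_one M))
    refine monotoneOn_of_deriv_nonneg (convex_Ioc 0 1)
      (fun t ht => (hd t ht.1).continuousAt.continuousWithinAt) ?_ ?_ <;> rw [interior_Ioc]
    · exact fun t ht => (hd t ht.1).differentiableAt.differentiableWithinAt
    · intro t ht
      rw [(hd t ht.1).deriv]
      linarith [hderiv_ge t (Ioo_subset_Ioc_self ht)]
  refine ⟨h 1 + M, ?_⟩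
  rintro _ ⟨y, hy, rfl⟩
  have := hmono hy (right_mem_Ioc.2 one_pos) hy.2
  nlinarith [abs_nonneg (q 1), hy.1]

theorem measure_eq_zero_of_tendsto_top_of_lintegral_le {α : Type*} [MeasurableSpace α]
    {μ : Measure α} {f : ℕ → α → ℝ≥0∞} (hf : ∀ n, Measurable (f n)) {C : ℝ≥0∞} (hC : C ≠ ∞)
    (hbound : ∀ n, ∫⁻ x, f n x ∂μ ≤ C) {s : Set α}
    (hs : ∀ x ∈ s, Tendsto (fun n => f n x) atTop (𝓝 ∞)) : μ s = 0 := by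
  set T := {x | liminf (fun n => f n x) atTop = ∞}
  have hT : MeasurableSet T := Measurable.liminf hf (measurableSet_singleton ∞)
  refine measure_mono_null (t := T) (fun x hx => (hs x hx).liminf_eq) ?_
  have hfatou : ∞ * μ T ≤ C := calc
    ∞ * μ T = ∫⁻ x in T, liminf (fun n => f n x) atTop ∂μ := by
      rw [← setLIntegral_const, setLIntegral_congr_fun hT fun x hx => hx]
    _ ≤ ∫⁻ x, liminf (fun n => f n x) atTop ∂μ := setLIntegral_le_lintegral _ _
    _ ≤ liminf (fun n => ∫⁻ x, f n x ∂μ) atTop := lintegral_liminf_le hf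
    _ ≤ C := liminf_le_of_frequently_le' (Frequently.of_forall hbound)
  by_contra hT0
  rw [ENNReal.top_mul hT0, top_le_iff] at hfatou
  exact hC hfatou

theorem HasDerivAt.re {f : ℝ → ℂ} {f' : ℂ} {t : ℝ} (h : HasDerivAt f f' t) :
    HasDerivAt (fun s => (f s).re) f'.re t :=
  reCLM.hasFDerivAt.comp_hasDerivAt t h

theorem HasDerivAt.im {f : ℝ → ℂ} {f' : ℂ} {t : ℝ} (h : HasDerivAt f f' t) :
    HasDerivAt (fun s => (f s).im) f'.im t :=
  imCLM.hasFDerivAt.comp_hasDerivAt t h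

theorem hasDerivAt_add_mul_I (x y : ℝ) : HasDerivAt (fun t : ℝ => (x : ℂ) + t * I) I y := by
  simpa using ((hasDerivAt_id y).ofReal_comp.mul_const I).const_add (x : ℂ)

theorem hasDerivAt_ofReal_add (x : ℝ) (w : ℂ) : HasDerivAt (fun t : ℝ => (t : ℂ) + w) 1 x := by
  simpa using (hasDerivAt_id x).ofReal_comp.add_const w

theorem HasDerivAt.im_comp_add_mul_I {F : ℂ → ℂ} {F' : ℂ} {x y : ℝ}
    (hF : HasDerivAt F F' (x + y * I)) :
    HasDerivAt (fun t : ℝ => (F (x + t * I)).im) F'.re y :=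
  ((hF.comp y (hasDerivAt_add_mul_I x y)).im).congr_deriv (by simp)

theorem HasDerivAt.re_comp_ofReal_add {F : ℂ → ℂ} {F' : ℂ} {x y : ℝ}
    (hF : HasDerivAt F F' (x + y * I)) :
    HasDerivAt (fun t : ℝ => (F (t + y * I)).re) F'.re x :=
  ((hF.comp x (hasDerivAt_ofReal_add x (y * I))).re).congr_deriv (by simp)

theorem HasDerivAt.log_norm_comp {g : ℂ → ℂ} {g' d : ℂ} {γ : ℝ → ℂ} {t : ℝ}
    (hg : HasDerivAt g g' (γ t)) (hγ : HasDerivAt γ d t) (hne : g (γ t) ≠ 0) :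
    HasDerivAt (fun s => Real.log ‖g (γ s)‖) (g' * d / g (γ t)).re t := by
  -- The rotation `c` moves `g (γ t)` onto the positive real axis, away from the branch cut.
  set c : ℂ := ‖g (γ t)‖ / g (γ t)
  have hc0 : c ≠ 0 := div_ne_zero (by simpa using hne) hne
  have hc : ‖c‖ = 1 := by simp [c, hne]
  have hslit : c * g (γ t) ∈ slitPlane := by
    rw [div_mul_cancel₀ _ hne]
    exact ofReal_mem_slitPlane.2 (norm_pos_iff.2 hne)
  have hlog := (((hg.comp t hγ).const_mul c).clog_real hslit).re
  rw [mul_div_mul_left _ _ hc0] at hlog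
  convert hlog using 2 with s
  · rw [log_re, Function.comp_apply, norm_mul, hc, one_mul]
  · rfl

section LogNorm

variable {g : ℂ → ℂ} {x y : ℝ}

theorem hasDerivAt_neg_log_norm_comp_add_mul_I (hg : DifferentiableAt ℂ g (x + y * I))
    (hne : g (x + y * I) ≠ 0) :
    HasDerivAt (fun t : ℝ => -Real.log ‖g (x + t * I)‖) (logDeriv g (x + y * I)).im y :=
  (hg.hasDerivAt.log_norm_comp (γ := fun t : ℝ => x + t * I) (hasDerivAt_add_mul_I x y)
    hne).neg.congr_deriv (by simp [logDeriv_apply, mul_div_right_comm])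

theorem hasDerivAt_neg_log_norm_comp_ofReal_add (hg : DifferentiableAt ℂ g (x + y * I))
    (hne : g (x + y * I) ≠ 0) :
    HasDerivAt (fun t : ℝ => -Real.log ‖g (t + y * I)‖) (-(logDeriv g (x + y * I)).re) x :=
  (hg.hasDerivAt.log_norm_comp (γ := fun t : ℝ => t + y * I) (hasDerivAt_ofReal_add x _)
    hne).neg.congr_deriv (by simp [logDeriv_apply])

end LogNorm

theorem DifferentiableOn.logDeriv {g : ℂ → ℂ} {s : Set ℂ} (hg : DifferentiableOn ℂ g s)
    (hs : IsOpen s) (hne : ∀ z ∈ s, g z ≠ 0) : DifferentiableOn ℂ (logDeriv g) s :=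
  (hg.deriv hs).div hg hne

theorem isOpen_upperHalfPlane : IsOpen ℂ₊ := isOpen_im_gt 0

theorem add_mul_I_mem_upperHalfPlane {x y : ℝ} (hy : 0 < y) : (x : ℂ) + y * I ∈ ℂ₊ := by
  simpa using hy

theorem ContinuousOn.comp_add_mul_I_mul {f : ℂ → ℝ} (hf : ContinuousOn f ℂ₊) {w : ℝ → ℝ}
    (hw : Continuous w) :
    ContinuousOn (Function.uncurry fun y x : ℝ => f (x + y * I) * w x) (Ioi 0 ×ˢ univ) :=
  (hf.comp (by fun_prop : Continuous fun p : ℝ × ℝ => (p.2 : ℂ) + p.1 * I).continuousOn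
    fun _ hp => add_mul_I_mem_upperHalfPlane hp.1).mul (hw.comp continuous_snd).continuousOn

section BoundedZeroFree

variable {g : ℂ → ℂ}

theorem integral_re_deriv_logDeriv_mul_sin_le (hg : DifferentiableOn ℂ g ℂ₊)
    (hne : ∀ z ∈ ℂ₊, g z ≠ 0) (hbd : ∀ z ∈ ℂ₊, ‖g z‖ ≤ 1) (a : ℝ) {y : ℝ} (hy : 0 < y) :
    ∫ x in a..a + 1, (deriv (logDeriv g) (x + y * I)).re * Real.sin (π * (x - a)) ≤
      π ^ 2 * ∫ x in a..a + 1, -Real.log ‖g (x + y * I)‖ * Real.sin (π * (x - a)) := by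
  have hP := hg.logDeriv isOpen_upperHalfPlane hne
  have hmem (t : ℝ) : (t : ℂ) + y * I ∈ ℂ₊ := add_mul_I_mem_upperHalfPlane hy
  have hnhds (t : ℝ) : ℂ₊ ∈ 𝓝 ((t : ℂ) + y * I) := isOpen_upperHalfPlane.mem_nhds (hmem t)
  have hP'cont : Continuous fun t : ℝ => (deriv (logDeriv g) (t + y * I)).re :=
    continuous_re.comp <| (hP.deriv isOpen_upperHalfPlane).continuousOn.comp_continuous
      (by fun_prop) hmem
  have hu (t : ℝ) : 0 ≤ -Real.log ‖g (t + y * I)‖ :=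
    neg_nonneg.2 (Real.log_nonpos (norm_nonneg _) (hbd _ (hmem t)))
  -- Green's identity has boundary term `π (u a + u (a + 1)) ≥ 0` for `u = -log ‖g (· + y i)‖`.
  have green := integral_deriv2_mul_sin_eq (a := a)
    (fun t _ => hasDerivAt_neg_log_norm_comp_ofReal_add (hg.differentiableAt (hnhds t))
      (hne _ (hmem t)))
    (fun t _ => ((hP.differentiableAt (hnhds t)).hasDerivAt.re_comp_ofReal_add).neg)
    (hP'cont.neg.intervalIntegrable _ _)
  simp only [neg_mul, intervalIntegral.integral_neg] at green ⊢
  nlinarith [hu a, hu (a + 1), pi_pos]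

theorem bddAbove_integral_neg_log_norm_mul_sin (hg : DifferentiableOn ℂ g ℂ₊)
    (hne : ∀ z ∈ ℂ₊, g z ≠ 0) (hbd : ∀ z ∈ ℂ₊, ‖g z‖ ≤ 1) (a : ℝ) :
    BddAbove ((fun y : ℝ =>
      ∫ x in a..a + 1, -Real.log ‖g (x + y * I)‖ * Real.sin (π * (x - a))) '' Ioc 0 1) := by
  have hP := hg.logDeriv isOpen_upperHalfPlane hne
  have hw : Continuous fun x : ℝ => Real.sin (π * (x - a)) := by fun_prop
  have hnhds {y : ℝ} (hy : 0 < y) (x : ℝ) : ℂ₊ ∈ 𝓝 ((x : ℂ) + y * I) :=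
    isOpen_upperHalfPlane.mem_nhds (add_mul_I_mem_upperHalfPlane hy)
  have hu : ContinuousOn (fun z => -Real.log ‖g z‖) ℂ₊ :=
    (hg.continuousOn.norm.log fun z hz => norm_ne_zero_iff.2 (hne z hz)).neg
  have hPim : ContinuousOn (fun z => (logDeriv g z).im) ℂ₊ :=
    continuous_im.comp_continuousOn hP.continuousOn
  have hP're : ContinuousOn (fun z => (deriv (logDeriv g) z).re) ℂ₊ :=
    continuous_re.comp_continuousOn (hP.deriv isOpen_upperHalfPlane).continuousOn
  refine bddAbove_image_Ioc_of_deriv2_le pi_pos.le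
    (h' := fun y => ∫ x in a..a + 1, (logDeriv g (x + y * I)).im * Real.sin (π * (x - a)))
    (h'' := fun y => ∫ x in a..a + 1, (deriv (logDeriv g) (x + y * I)).re * Real.sin (π * (x - a)))
    (fun y hy => ?_) (fun y hy => ?_)
    (fun y hy => integral_re_deriv_logDeriv_mul_sin_le hg hne hbd a hy) (fun y hy => ?_)
  · refine hasDerivAt_intervalIntegral_of_continuousOn isOpen_Ioi hy (hu.comp_add_mul_I_mul hw)
      (hPim.comp_add_mul_I_mul hw) fun y hy x => ?_
    exact (hasDerivAt_neg_log_norm_comp_add_mul_I (hg.differentiableAt (hnhds hy x))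
      (hne _ (add_mul_I_mem_upperHalfPlane hy))).mul_const _
  · refine hasDerivAt_intervalIntegral_of_continuousOn isOpen_Ioi hy (hPim.comp_add_mul_I_mul hw)
      (hP're.comp_add_mul_I_mul hw) fun y hy x => ?_
    exact (hP.differentiableAt (hnhds hy x)).hasDerivAt.im_comp_add_mul_I.mul_const _
  · refine intervalIntegral.integral_nonneg (by linarith) fun x hx => mul_nonneg ?_ ?_
    · exact neg_nonneg.2 (Real.log_nonpos (norm_nonneg _)
        (hbd _ (add_mul_I_mem_upperHalfPlane hy)))
    · exact sin_pi_mul_sub_nonneg hx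

theorem tendsto_neg_log_norm_atTop (hne : ∀ z ∈ ℂ₊, g z ≠ 0) {x : ℝ}
    (hlim : Tendsto (fun ε : ℝ => g (x + ε * I)) (𝓝[>] 0) (𝓝 0)) :
    Tendsto (fun ε : ℝ => -Real.log ‖g (x + ε * I)‖) (𝓝[>] 0) atTop := by
  have hnorm : Tendsto (fun ε : ℝ => ‖g (x + ε * I)‖) (𝓝[>] 0) (𝓝[>] 0) := by
    refine tendsto_nhdsWithin_iff.2 ⟨by simpa using hlim.norm, ?_⟩
    filter_upwards [self_mem_nhdsWithin] with ε hε
    exact norm_pos_iff.2 (hne _ (add_mul_I_mem_upperHalfPlane hε))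
  exact tendsto_neg_atBot_atTop.comp (Real.tendsto_log_nhdsGT_zero.comp hnorm)

theorem volume_inter_Ioo_eq_zero_of_tendsto_zero (hg : DifferentiableOn ℂ g ℂ₊)
    (hne : ∀ z ∈ ℂ₊, g z ≠ 0) (hbd : ∀ z ∈ ℂ₊, ‖g z‖ ≤ 1) {E : Set ℝ}
    (hlim : ∀ x ∈ E, Tendsto (fun ε : ℝ => g (x + ε * I)) (𝓝[>] 0) (𝓝 0)) (a : ℝ) :
    volume (E ∩ Ioo a (a + 1)) = 0 := by
  obtain ⟨C, hC⟩ := bddAbove_integral_neg_log_norm_mul_sin hg hne hbd a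
  set y : ℕ → ℝ := fun n => 1 / (n + 1)
  have hy (n : ℕ) : y n ∈ Ioc 0 1 :=
    ⟨Nat.one_div_pos_of_nat, div_le_one_of_le₀ (by simp) (by positivity)⟩
  have hy_tendsto : Tendsto y atTop (𝓝[>] 0) :=
    tendsto_nhdsWithin_iff.2 ⟨tendsto_one_div_add_atTop_nhds_zero_nat,
      Eventually.of_forall fun n => (hy n).1⟩
  set F : ℕ → ℝ → ℝ := fun n x => -Real.log ‖g (x + y n * I)‖ * Real.sin (π * (x - a))
  have hF_cont (n : ℕ) : Continuous (F n) :=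
    ((hg.continuousOn.norm.log fun z hz => norm_ne_zero_iff.2 (hne z hz)).neg.comp_continuous
      (by fun_prop) fun _ => add_mul_I_mem_upperHalfPlane (hy n).1).mul (by fun_prop)
  have hF_nonneg (n : ℕ) {x : ℝ} (hx : x ∈ Icc a (a + 1)) : 0 ≤ F n x :=
    mul_nonneg (neg_nonneg.2 (Real.log_nonpos (norm_nonneg _)
      (hbd _ (add_mul_I_mem_upperHalfPlane (hy n).1)))) (sin_pi_mul_sub_nonneg hx)
  have hbound (n : ℕ) : ∫⁻ x in Ioc a (a + 1), ENNReal.ofReal (F n x) ≤ ENNReal.ofReal C := by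
    rw [← ofReal_integral_eq_lintegral_ofReal ((hF_cont n).integrableOn_Ioc)
      ((ae_restrict_iff' measurableSet_Ioc).2 (Eventually.of_forall fun x hx =>
        hF_nonneg n (Ioc_subset_Icc_self hx))), ← intervalIntegral.integral_of_le (by linarith)]
    exact ENNReal.ofReal_le_ofReal (hC ⟨y n, hy n, rfl⟩)
  have hnull := measure_eq_zero_of_tendsto_top_of_lintegral_le
    (fun n => (hF_cont n).measurable.ennreal_ofReal) ENNReal.ofReal_ne_top hbound
    (s := E ∩ Ioo a (a + 1)) fun x ⟨hxE, hx⟩ => ENNReal.tendsto_ofReal_atTop.comp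
      (((tendsto_neg_log_norm_atTop hne (hlim x hxE)).comp hy_tendsto).atTop_mul_const
        (sin_pi_mul_sub_pos hx))
  rwa [Measure.restrict_apply' measurableSet_Ioc,
    inter_eq_left.2 (inter_subset_right.trans Ioo_subset_Ioc_self)] at hnull

theorem volume_eq_zero_of_tendsto_zero (hg : DifferentiableOn ℂ g ℂ₊)
    (hne : ∀ z ∈ ℂ₊, g z ≠ 0) (hbd : ∀ z ∈ ℂ₊, ‖g z‖ ≤ 1) {E : Set ℝ}
    (hlim : ∀ x ∈ E, Tendsto (fun ε : ℝ => g (x + ε * I)) (𝓝[>] 0) (𝓝 0)) :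
    volume E = 0 :=
  measure_null_of_locally_null E fun x _ =>
    ⟨E ∩ Ioo (x - 1 / 2) (x - 1 / 2 + 1),
      inter_mem_nhdsWithin E (Ioo_mem_nhds (by linarith) (by linarith)),
      volume_inter_Ioo_eq_zero_of_tendsto_zero hg hne hbd hlim _⟩

end BoundedZeroFree

theorem DifferentiableOn.eq_const_or_im_pos {m : ℂ → ℂ} (hm : DifferentiableOn ℂ m ℂ₊)
    (him : ∀ z ∈ ℂ₊, 0 ≤ (m z).im) : (∃ c, ∀ z ∈ ℂ₊, m z = c) ∨ ∀ z ∈ ℂ₊, 0 < (m z).im := by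
  refine ((hm.analyticOnNhd isOpen_upperHalfPlane).is_constant_or_isOpen
    (convex_halfSpace_im_gt 0).isPreconnected).imp_right fun hopen z hz => ?_
  have himage : m '' ℂ₊ ⊆ interior {w : ℂ | 0 ≤ w.im} :=
    interior_maximal (image_subset_iff.2 him) (hopen _ subset_rfl isOpen_upperHalfPlane)
  rw [interior_setOfPred_le_im] at himage
  exact himage ⟨z, hz, rfl⟩

theorem add_I_ne_zero {w : ℂ} (hw : 0 ≤ w.im) : w + I ≠ 0 := fun h => by
  have him := congrArg im h
  simp only [add_im, I_im, zero_im] at him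
  linarith

theorem norm_div_add_I_le_one {w : ℂ} (hw : 0 ≤ w.im) : ‖w / (w + I)‖ ≤ 1 := by
  rw [norm_div, div_le_one (norm_pos_iff.2 (add_I_ne_zero hw)),
    ← sq_le_sq₀ (norm_nonneg _) (norm_nonneg _), ← normSq_eq_norm_sq, ← normSq_eq_norm_sq]
  simp only [normSq_apply, add_re, add_im, I_re, I_im, add_zero]
  nlinarith

theorem herglotz_zero_boundary_values_general (m : ℂ → ℂ)
    (hanal : DifferentiableOn ℂ m {z : ℂ | 0 < z.im})
    (him : ∀ z : ℂ, 0 < z.im → 0 ≤ (m z).im)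
    (E : Set ℝ) (hEpos : 0 < volume E)
    (hlim : ∀ lam ∈ E,
      Tendsto (fun ε : ℝ => m (lam + ε * Complex.I)) (𝓝[>] 0) (𝓝 0)) :
    ∀ z : ℂ, 0 < z.im → m z = 0 := by
  rcases hanal.eq_const_or_im_pos him with ⟨c, hc⟩ | hpos
  · obtain ⟨lam, hlam⟩ := nonempty_of_measure_ne_zero hEpos.ne'
    have hconst : Tendsto (fun ε : ℝ => m (lam + ε * I)) (𝓝[>] 0) (𝓝 c) :=
      tendsto_const_nhds.congr' <| eventually_nhdsWithin_of_forall fun ε hε =>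
        (hc _ (add_mul_I_mem_upperHalfPlane hε)).symm
    intro z hz
    rw [hc z hz, tendsto_nhds_unique hconst (hlim lam hlam)]
  · have hden (z : ℂ) (hz : z ∈ ℂ₊) : m z + I ≠ 0 := add_I_ne_zero (him z hz)
    refine absurd (volume_eq_zero_of_tendsto_zero (g := fun z => m z / (m z + I))
      (hanal.div (hanal.add_const I) hden)
      (fun z hz => div_ne_zero (fun h => by simpa [h] using hpos z hz) (hden z hz))
      (fun z hz => norm_div_add_I_le_one (him z hz)) fun x hx => ?_) hEpos.ne'
    have hquot : Tendsto (fun ε : ℝ => m (x + ε * I) / (m (x + ε * I) + I)) (𝓝[>] 0)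
        (𝓝 (0 / (0 + I))) := (hlim x hx).div ((hlim x hx).add_const I) (by simp)
    simpa using hquot

/-- A Herglotz function with vanishing normal boundary values on a set of
positive Lebesgue measure vanishes identically. -/
theorem herglotz_zero_boundary_values (m : ℂ → ℂ)
    (hanal : DifferentiableOn ℂ m {z : ℂ | 0 < z.im})
    (him : ∀ z : ℂ, 0 < z.im → 0 ≤ (m z).im)
    (E : Set ℝ) (hE : MeasurableSet E) (hEpos : 0 < volume E)
    (hlim : ∀ lam ∈ E,
      Tendsto (fun ε : ℝ => m (lam + ε * Complex.I)) (𝓝[>] 0) (𝓝 0)) :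
    ∀ z : ℂ, 0 < z.im → m z = 0 :=
  herglotz_zero_boundary_values_general m hanal him E hEpos hlim
end

section
/- Let m be a Herglotz function with representation m(z) = c + dz + ∫_ℝ (1/(λ−z) − λ/(1+λ²)) dω(λ). If there exists L > 0 with 0 ≤ Im m(z) ≤ L for all z ∈ ℂ₊, then d = 0 and the measure ω is absolutely continuous with respect to Lebesgue measure with density bounded by L/π. -/
open MeasureTheory Set Filter Topology Real

/-!
Taking imaginary parts in the representation gives `Im m(x + iy) = d y + ∫ P_y(t - x) dω(t)`,
where `P_y(u) = y / (u² + y²)`. Both terms are nonnegative and their sum is at most `L`, so `d = 0`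
(let `y → ∞`) and every Poisson integral of `ω` is at most `L`. Integrating `P_y(t - x)` over
`x ∈ (a, b)` gives `arctan ((b - t) / y) - arctan ((a - t) / y)`, which tends to `π` on `(a, b)` as
`y → 0⁺`; Tonelli and Fatou then give `π ω (a, b) ≤ L (b - a)`. A Vitali covering argument upgrades
this to `ω ≤ (L / π) • volume`, and the Radon–Nikodym derivative of `ω`, truncated at `L / π`, is
the density.
-/

/-- The Poisson kernel of the upper half-plane without its factor `1/π`. -/
noncomputable def halfPlanePoissonKernel (y x : ℝ) : ℝ := y / (x ^ 2 + y ^ 2)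

section PoissonKernel

variable {y : ℝ}

lemma halfPlanePoissonKernel_nonneg (hy : 0 ≤ y) (x : ℝ) : 0 ≤ halfPlanePoissonKernel y x := by
  unfold halfPlanePoissonKernel; positivity

lemma halfPlanePoissonKernel_pos (hy : 0 < y) (x : ℝ) : 0 < halfPlanePoissonKernel y x := by
  unfold halfPlanePoissonKernel; positivity

lemma halfPlanePoissonKernel_neg (y x : ℝ) :
    halfPlanePoissonKernel y (-x) = halfPlanePoissonKernel y x := by
  simp [halfPlanePoissonKernel]

lemma continuous_halfPlanePoissonKernel (hy : 0 < y) : Continuous (halfPlanePoissonKernel y) :=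
  continuous_const.div (by fun_prop) fun x => by positivity

lemma im_nevanlinna_integrand (z : ℂ) (t : ℝ) :
    (1 / ((t : ℂ) - z) - (t : ℂ) / (1 + (t : ℂ) ^ 2)).im =
      halfPlanePoissonKernel z.im (t - z.re) := by
  have hreal : (t : ℂ) / (1 + (t : ℂ) ^ 2) = ((t / (1 + t ^ 2) : ℝ) : ℂ) := by push_cast; ring
  rw [Complex.sub_im, hreal, Complex.ofReal_im, one_div, Complex.inv_im, Complex.normSq_apply]
  simp only [Complex.sub_re, Complex.sub_im, Complex.ofReal_re, Complex.ofReal_im,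
    halfPlanePoissonKernel]
  ring

lemma im_integral_nevanlinna_integrand {ω : Measure ℝ} {z : ℂ}
    (h : Integrable (fun t : ℝ => 1 / ((t : ℂ) - z) - (t : ℂ) / (1 + (t : ℂ) ^ 2)) ω) :
    (∫ t, (1 / ((t : ℂ) - z) - (t : ℂ) / (1 + (t : ℂ) ^ 2)) ∂ω).im =
      ∫ t, halfPlanePoissonKernel z.im (t - z.re) ∂ω := by
  rw [← RCLike.im_to_complex, ← integral_im h]
  simp only [RCLike.im_to_complex, im_nevanlinna_integrand]

lemma integral_halfPlanePoissonKernel_sub (hy : 0 < y) (t a b : ℝ) :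
    ∫ x in a..b, halfPlanePoissonKernel y (x - t) =
      arctan ((b - t) / y) - arctan ((a - t) / y) := by
  refine intervalIntegral.integral_eq_sub_of_hasDerivAt (f := fun u => arctan ((u - t) / y))
    (fun x _ => ?_)
    (((continuous_halfPlanePoissonKernel hy).comp (continuous_sub_right t)).intervalIntegrable a b)
  have hlin : HasDerivAt (fun u : ℝ => (u - t) / y) (1 / y) x := by
    simpa using ((hasDerivAt_id x).sub_const t).div_const y
  refine ((hasDerivAt_arctan ((x - t) / y)).comp x hlin).congr_deriv ?_
  unfold halfPlanePoissonKernel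
  field_simp
  ring

lemma tendsto_arctan_sub_arctan_nhdsGT_zero {a b t : ℝ} (ht : t ∈ Ioo a b) :
    Tendsto (fun y => arctan ((b - t) / y) - arctan ((a - t) / y)) (𝓝[>] 0) (𝓝 π) := by
  have hb : Tendsto (fun y => (b - t) / y) (𝓝[>] 0) atTop := by
    simpa only [div_eq_mul_inv] using tendsto_inv_nhdsGT_zero.const_mul_atTop (sub_pos.2 ht.2)
  have ha : Tendsto (fun y => (a - t) / y) (𝓝[>] 0) atBot := by
    simpa only [div_eq_mul_inv] using
      tendsto_inv_nhdsGT_zero.const_mul_atTop_of_neg (sub_neg.2 ht.1)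
  have := ((tendsto_arctan_atTop.mono_right nhdsWithin_le_nhds).comp hb).sub
    ((tendsto_arctan_atBot.mono_right nhdsWithin_le_nhds).comp ha)
  rwa [sub_neg_eq_add, add_halves] at this

end PoissonKernel

lemma isLocallyFiniteMeasure_of_integrable_of_pos {X : Type*} [TopologicalSpace X]
    [MeasurableSpace X] {μ : Measure X} {f : X → ℝ} (hf : Continuous f) (hpos : ∀ x, 0 < f x)
    (hint : Integrable f μ) : IsLocallyFiniteMeasure μ := by
  refine ⟨fun x => ⟨{y | f x / 2 ≤ ‖f y‖}, ?_, hint.measure_norm_ge_lt_top (half_pos (hpos x))⟩⟩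
  filter_upwards [hf.continuousAt.eventually (Ioi_mem_nhds (half_lt_self (hpos x)))] with y hy
  exact hy.le.trans (le_abs_self _)

lemma MeasureTheory.Measure.rnDeriv_le_of_le_smul {α : Type*} [MeasurableSpace α] {μ ν : Measure α}
    [SigmaFinite ν] {c : ENNReal} (h : μ ≤ c • ν) : μ.rnDeriv ν ≤ᵐ[ν] fun _ => c := by
  refine ae_le_of_forall_setLIntegral_le_of_sigmaFinite (μ.measurable_rnDeriv ν) fun s _ _ => ?_
  rw [setLIntegral_const, ← smul_eq_mul, ← Measure.smul_apply]
  exact (Measure.setLIntegral_rnDeriv_le s).trans (h s)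

lemma exists_bounded_density_of_le_smul {α : Type*} [MeasurableSpace α] {μ ν : Measure α}
    [SigmaFinite μ] [SigmaFinite ν] {C : ℝ} (hC : 0 ≤ C) (h : μ ≤ ENNReal.ofReal C • ν) :
    ∃ g : α → ℝ, Measurable g ∧ (∀ x, 0 ≤ g x ∧ g x ≤ C) ∧
      μ = ν.withDensity fun x => ENNReal.ofReal (g x) := by
  refine ⟨fun x => min (μ.rnDeriv ν x).toReal C,
    (μ.measurable_rnDeriv ν).ennreal_toReal.min measurable_const,
    fun x => ⟨le_min ENNReal.toReal_nonneg hC, min_le_right _ _⟩, ?_⟩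
  have hg : (fun x => ENNReal.ofReal (min (μ.rnDeriv ν x).toReal C)) =ᵐ[ν] μ.rnDeriv ν := by
    filter_upwards [Measure.rnDeriv_le_of_le_smul h] with x hx
    rw [min_eq_left (ENNReal.toReal_le_of_le_ofReal hC hx),
      ENNReal.ofReal_toReal (ne_top_of_le_ne_top ENNReal.ofReal_ne_top hx)]
  rw [withDensity_congr_ae hg,
    Measure.withDensity_rnDeriv_eq μ ν (Measure.absolutelyContinuous_of_le_smul h)]

lemma le_smul_volume_of_measure_Ioo_le {μ : Measure ℝ} [SFinite μ] {C : ℝ}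
    (h : ∀ a b, μ (Ioo a b) ≤ ENNReal.ofReal C * volume (Ioo a b)) :
    μ ≤ ENNReal.ofReal C • volume := by
  have hball : ∀ x r,
      μ (Metric.closedBall x r) ≤ ENNReal.ofReal C * volume (Metric.closedBall x r) := by
    intro x r
    rw [Real.volume_closedBall]
    have hlim : Tendsto (fun ε => ENNReal.ofReal C * ENNReal.ofReal (2 * r + 2 * ε)) (𝓝[>] 0)
        (𝓝 (ENNReal.ofReal C * ENNReal.ofReal (2 * r))) :=
      ENNReal.Tendsto.const_mul ((ENNReal.continuous_ofReal.tendsto' _ _ (by simp)).comp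
        ((Continuous.tendsto (by fun_prop) 0).mono_left nhdsWithin_le_nhds))
        (.inr ENNReal.ofReal_ne_top)
    refine ge_of_tendsto hlim (eventually_nhdsWithin_of_forall fun ε (hε : 0 < ε) => ?_)
    calc μ (Metric.closedBall x r) ≤ μ (Ioo (x - r - ε) (x + r + ε)) := by
          refine measure_mono fun t ht => ?_
          rw [Real.closedBall_eq_Icc] at ht
          exact ⟨by linarith [ht.1], by linarith [ht.2]⟩
      _ ≤ _ := (h _ _).trans_eq (by rw [Real.volume_Ioo]; congr 2; ring)
  have : IsLocallyFiniteMeasure (ENNReal.ofReal C • (volume : Measure ℝ)) :=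
    inferInstanceAs (IsLocallyFiniteMeasure (C.toNNReal • volume))
  refine fun s => (Besicovitch.vitaliFamily μ).measure_le_of_frequently_le _ .rfl s
    fun x _ => Eventually.frequently ?_
  filter_upwards [VitaliFamily.eventually_filterAt_mem_setsAt _ x] with t ht
  obtain ⟨r, -, rfl⟩ := ht
  simpa using hball x r

section PoissonIntegral

variable {μ : Measure ℝ} {L : ℝ}

lemma lintegral_intervalIntegral_halfPlanePoissonKernel_le [SFinite μ] {y : ℝ} (hy : 0 < y)
    (hint : ∀ x, Integrable (fun t => halfPlanePoissonKernel y (t - x)) μ)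
    (hle : ∀ x, ∫ t, halfPlanePoissonKernel y (t - x) ∂μ ≤ L) {a b : ℝ} (hab : a ≤ b) :
    ∫⁻ t, ENNReal.ofReal (∫ x in a..b, halfPlanePoissonKernel y (x - t)) ∂μ
      ≤ ENNReal.ofReal L * volume (Ioc a b) := by
  have hP : Continuous fun p : ℝ × ℝ => halfPlanePoissonKernel y (p.2 - p.1) :=
    (continuous_halfPlanePoissonKernel hy).comp (by fun_prop)
  calc ∫⁻ t, ENNReal.ofReal (∫ x in a..b, halfPlanePoissonKernel y (x - t)) ∂μ
      = ∫⁻ t, (∫⁻ x in Ioc a b, ENNReal.ofReal (halfPlanePoissonKernel y (x - t))) ∂μ := by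
        refine lintegral_congr fun t => ?_
        rw [intervalIntegral.integral_of_le hab]
        exact ofReal_integral_eq_lintegral_ofReal
          (hP.comp (by fun_prop : Continuous fun x => (t, x))).integrableOn_Ioc
          (.of_forall fun x => halfPlanePoissonKernel_nonneg hy.le _)
    _ = ∫⁻ x in Ioc a b, ∫⁻ t, ENNReal.ofReal (halfPlanePoissonKernel y (t - x)) ∂μ := by
        rw [lintegral_lintegral_swap
          (f := fun t x => ENNReal.ofReal (halfPlanePoissonKernel y (x - t)))
          (ENNReal.continuous_ofReal.comp hP).measurable.aemeasurable]
        refine lintegral_congr fun x => lintegral_congr fun t => ?_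
        rw [← neg_sub, halfPlanePoissonKernel_neg]
    _ ≤ ∫⁻ _ in Ioc a b, ENNReal.ofReal L := by
        refine lintegral_mono fun x => ?_
        rw [← ofReal_integral_eq_lintegral_ofReal (hint x)
          (.of_forall fun t => halfPlanePoissonKernel_nonneg hy.le _)]
        exact ENNReal.ofReal_le_ofReal (hle x)
    _ = ENNReal.ofReal L * volume (Ioc a b) := setLIntegral_const _ _

lemma measure_Ioo_le_of_integral_halfPlanePoissonKernel_le [SFinite μ]
    (hint : ∀ x y, 0 < y → Integrable (fun t => halfPlanePoissonKernel y (t - x)) μ)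
    (hle : ∀ x y, 0 < y → ∫ t, halfPlanePoissonKernel y (t - x) ∂μ ≤ L) (a b : ℝ) :
    μ (Ioo a b) ≤ ENNReal.ofReal (L / π) * volume (Ioo a b) := by
  rcases le_or_gt b a with hba | hab
  · simp [Ioo_eq_empty_of_le hba]
  set y : ℕ → ℝ := fun n => 1 / (n + 1)
  have hy : ∀ n, 0 < y n := fun n => by positivity
  have hy0 : Tendsto y atTop (𝓝[>] 0) :=
    tendsto_nhdsWithin_iff.2 ⟨tendsto_one_div_add_atTop_nhds_zero_nat, .of_forall hy⟩
  set F : ℕ → ℝ → ENNReal := fun n t =>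
    ENNReal.ofReal (arctan ((b - t) / y n) - arctan ((a - t) / y n))
  have hF : ∀ t ∈ Ioo a b, Tendsto (fun n => F n t) atTop (𝓝 (ENNReal.ofReal π)) :=
    fun t ht => (ENNReal.tendsto_ofReal (tendsto_arctan_sub_arctan_nhdsGT_zero ht)).comp hy0
  have hπ : ENNReal.ofReal π * μ (Ioo a b) ≤ ENNReal.ofReal L * volume (Ioo a b) :=
    calc ENNReal.ofReal π * μ (Ioo a b)
        = ∫⁻ t, (Ioo a b).indicator (fun _ => ENNReal.ofReal π) t ∂μ := by
          rw [lintegral_indicator measurableSet_Ioo, setLIntegral_const]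
      _ ≤ ∫⁻ t, liminf (fun n => F n t) atTop ∂μ := lintegral_mono fun t => by
          by_cases ht : t ∈ Ioo a b
          · rw [indicator_of_mem ht, (hF t ht).liminf_eq]
          · rw [indicator_of_notMem ht]; exact zero_le
      _ ≤ liminf (fun n => ∫⁻ t, F n t ∂μ) atTop :=
          lintegral_liminf_le fun n => by simp only [F]; fun_prop
      _ ≤ ENNReal.ofReal L * volume (Ioc a b) := by
          refine liminf_le_of_frequently_le' (.of_forall fun n => ?_)
          simp only [F, ← integral_halfPlanePoissonKernel_sub (hy n)]
          exact lintegral_intervalIntegral_halfPlanePoissonKernel_le (hy n)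
            (fun x => hint x _ (hy n)) (fun x => hle x _ (hy n)) hab.le
      _ = ENNReal.ofReal L * volume (Ioo a b) := by rw [Real.volume_Ioc, Real.volume_Ioo]
  rw [ENNReal.ofReal_div_of_pos pi_pos, div_eq_mul_inv, mul_right_comm, ← div_eq_mul_inv,
    ENNReal.le_div_iff_mul_le (.inl (by simp [pi_pos])) (.inl ENNReal.ofReal_ne_top), mul_comm]
  exact hπ

end PoissonIntegral

theorem herglotz_bounded_imaginary_part_general (m : ℂ → ℂ) (c d : ℝ)
    (hd : 0 ≤ d) (ω : Measure ℝ)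
    (hint : ∀ z : ℂ, 0 < z.im →
      Integrable (fun t : ℝ => 1 / ((t : ℂ) - z) - (t : ℂ) / (1 + (t : ℂ) ^ 2)) ω)
    (hrep : ∀ z : ℂ, 0 < z.im →
      m z = (c : ℂ) + (d : ℂ) * z
        + ∫ t, (1 / ((t : ℂ) - z) - (t : ℂ) / (1 + (t : ℂ) ^ 2)) ∂ω)
    (L : ℝ)
    (hbd : ∀ z : ℂ, 0 < z.im → 0 ≤ (m z).im ∧ (m z).im ≤ L) :
    d = 0 ∧ ∃ g : ℝ → ℝ, Measurable g ∧ (∀ lam, 0 ≤ g lam ∧ g lam ≤ L / Real.pi) ∧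
      ω = volume.withDensity (fun lam => ENNReal.ofReal (g lam)) := by
  have hP : ∀ x y : ℝ, 0 < y → Integrable (fun t => halfPlanePoissonKernel y (t - x)) ω :=
    fun x y hy => (hint ⟨x, y⟩ hy).im.congr (.of_forall (im_nevanlinna_integrand ⟨x, y⟩))
  have him : ∀ x y : ℝ, 0 < y →
      (m ⟨x, y⟩).im = d * y + ∫ t, halfPlanePoissonKernel y (t - x) ∂ω := by
    intro x y hy
    rw [hrep _ hy, Complex.add_im, im_integral_nevanlinna_integrand (hint _ hy)]
    simp
  have hle : ∀ x y : ℝ, 0 < y → d * y + ∫ t, halfPlanePoissonKernel y (t - x) ∂ω ≤ L :=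
    fun x y hy => him x y hy ▸ (hbd _ hy).2
  have hdy : ∀ y : ℝ, 0 < y → d * y ≤ L := fun y hy => by
    have : 0 ≤ ∫ t, halfPlanePoissonKernel y (t - 0) ∂ω :=
      integral_nonneg fun t => halfPlanePoissonKernel_nonneg hy.le _
    linarith [hle 0 y hy]
  have hL : 0 ≤ L := (hbd ⟨0, 1⟩ one_pos).1.trans (hbd _ one_pos).2
  have hd0 : d = 0 := by
    refine le_antisymm (not_lt.1 fun hdpos => ?_) hd
    have := hdy ((L + 1) / d) (by positivity)
    rw [mul_div_cancel₀ _ hdpos.ne'] at this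
    linarith
  have : IsLocallyFiniteMeasure ω := isLocallyFiniteMeasure_of_integrable_of_pos
    (continuous_halfPlanePoissonKernel one_pos) (halfPlanePoissonKernel_pos one_pos)
    (by simpa using hP 0 1 one_pos)
  refine ⟨hd0, exists_bounded_density_of_le_smul (by positivity) (le_smul_volume_of_measure_Ioo_le
    (measure_Ioo_le_of_integral_halfPlanePoissonKernel_le hP fun x y hy => ?_))⟩
  linarith [hle x y hy, mul_nonneg hd hy.le]

/-- A Herglotz function with bounded imaginary part has `d = 0` and a purely
absolutely continuous representing measure with density bounded by `L/π`. -/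
theorem herglotz_bounded_imaginary_part (m : ℂ → ℂ) (c d : ℝ)
    (hd : 0 ≤ d) (ω : Measure ℝ)
    (hω : ∫⁻ t, ENNReal.ofReal (1 / (1 + t ^ 2)) ∂ω ≠ ⊤)
    (hint : ∀ z : ℂ, 0 < z.im →
      Integrable (fun t : ℝ => 1 / ((t : ℂ) - z) - (t : ℂ) / (1 + (t : ℂ) ^ 2)) ω)
    (hrep : ∀ z : ℂ, 0 < z.im →
      m z = (c : ℂ) + (d : ℂ) * z
        + ∫ t, (1 / ((t : ℂ) - z) - (t : ℂ) / (1 + (t : ℂ) ^ 2)) ∂ω)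
    (L : ℝ) (hL : 0 < L)
    (hbd : ∀ z : ℂ, 0 < z.im → 0 ≤ (m z).im ∧ (m z).im ≤ L) :
    d = 0 ∧ ∃ g : ℝ → ℝ, Measurable g ∧ (∀ lam, 0 ≤ g lam ∧ g lam ≤ L / Real.pi) ∧
      ω = volume.withDensity (fun lam => ENNReal.ofReal (g lam)) :=
  herglotz_bounded_imaginary_part_general m c d hd ω hint hrep L hbd
end
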